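/- arXiv:2505.20217 — 2 statements merged into one kernel-verified Lean document; each statement's English description precedes it below -/
import Mathlib

section
/- Let S : [α,β] → ℝ be continuous and attain its strict global maximum on [α,β] at finitely many points σ₁ < … < σ_ℓ in (α,β), with max{S(α),S(β)} < S(σ₁), and let S be twice continuously differentiable near each σᵢ with S''(σᵢ) < 0. Then for x ∈ (α,β) with x ∉ {σ₁,…,σ_ℓ}, lim_{ε→0} (∫_α^x e^{S(y)/ε} dy) / (∫_α^β e^{S(y)/ε} dy) = ( Σ_{i : σᵢ < x} 1/√(−S''(σᵢ)) ) / ( Σ_{j=1}^ℓ 1/√(−S''(σⱼ)) ). -/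
open Real MeasureTheory Filter Set intervalIntegral Topology


lemma quad_bound (S : ℝ → ℝ) (a b σ₀ : ℝ) (ha : a < σ₀) (hb : σ₀ < b)
    (hC2 : ContDiffAt ℝ 2 S σ₀) (hloc : ∀ y ∈ Set.Icc a b, S y ≤ S σ₀)
    {δ : ℝ} (hδ : 0 < δ) :
    ∃ r > 0, Set.Icc (σ₀ - r) (σ₀ + r) ⊆ Set.Ioo a b ∧
      ∀ y, |y - σ₀| ≤ r →
        |S y - S σ₀ - (iteratedDeriv 2 S σ₀)/2 * (y - σ₀)^2| ≤ δ * (y - σ₀)^2 := by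
  obtain ⟨u, hu, hcd⟩ := hC2.contDiffOn le_rfl (by simp)
  have hmemIoo : Set.Ioo a b ∈ 𝓝 σ₀ := Ioo_mem_nhds ha hb
  obtain ⟨ρ, hρ, hball⟩ := Metric.mem_nhds_iff.mp (Filter.inter_mem hu hmemIoo)
  have hV : ContDiffOn ℝ 2 S (Metric.ball σ₀ ρ) :=
    hcd.mono (fun y hy => (hball hy).1)
  have hballIoo : Metric.ball σ₀ ρ ⊆ Set.Ioo a b := fun y hy => (hball hy).2
  -- differentiability of S on the ball
  have hd1 : ∀ y ∈ Metric.ball σ₀ ρ, DifferentiableAt ℝ S y := fun y hy =>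
    ((hV.differentiableOn (by norm_num)) y hy).differentiableAt
      (Metric.isOpen_ball.mem_nhds hy)
  -- deriv S is C¹ on the ball
  have hd2 : ContDiffOn ℝ 1 (deriv S) (Metric.ball σ₀ ρ) := by
    have := hV.deriv_of_isOpen (m := 1) Metric.isOpen_ball (by norm_num)
    simpa using this
  have hderivC : ContinuousOn (deriv S) (Metric.ball σ₀ ρ) := hd2.continuousOn
  have hmemball : σ₀ ∈ Metric.ball σ₀ ρ := Metric.mem_ball_self hρ
  have hL : HasDerivAt (deriv S) (iteratedDeriv 2 S σ₀) σ₀ := by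
    have hdiff : DifferentiableAt ℝ (deriv S) σ₀ :=
      ((hd2.differentiableOn (by norm_num)) σ₀ hmemball).differentiableAt
        (Metric.isOpen_ball.mem_nhds hmemball)
    have : iteratedDeriv 2 S σ₀ = deriv (deriv S) σ₀ := by
      rw [iteratedDeriv_succ, iteratedDeriv_one]
    rw [this]
    exact hdiff.hasDerivAt
  have h0 : deriv S σ₀ = 0 := by
    have : IsLocalMax S σ₀ :=
      Filter.eventually_of_mem (Icc_mem_nhds ha hb) hloc
    exact this.deriv_eq_zero
  -- little-o estimate
  have hlo := (hasDerivAt_iff_isLittleO.mp hL)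
  have hev := (Asymptotics.isLittleO_iff.mp hlo) hδ
  obtain ⟨r₁, hr₁, hball1⟩ := Metric.eventually_nhds_iff_ball.mp hev
  set r := min (r₁/2) (ρ/2) with hrdef
  have hrpos : 0 < r := lt_min (by linarith) (by linarith)
  refine ⟨r, hrpos, ?_, ?_⟩
  · intro y hy
    apply hballIoo
    simp only [Metric.mem_ball, Real.dist_eq]
    have h1 : |y - σ₀| ≤ r := by
      rw [abs_le]; constructor <;> [linarith [hy.1]; linarith [hy.2]]
    calc |y - σ₀| ≤ r := h1
      _ ≤ ρ/2 := min_le_right _ _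
      _ < ρ := by linarith
  · intro y hy
    have hyball : ∀ t ∈ Set.uIcc σ₀ y, |t - σ₀| ≤ |y - σ₀| := by
      intro t ht
      rcases Set.mem_uIcc.mp ht with h | h <;> rw [abs_le] <;> constructor <;>
        linarith [le_abs_self (y - σ₀), neg_abs_le (y - σ₀), abs_nonneg (y - σ₀), h.1, h.2]
    have hsubball : Set.uIcc σ₀ y ⊆ Metric.ball σ₀ ρ := by
      intro t ht
      simp only [Metric.mem_ball, Real.dist_eq]
      calc |t - σ₀| ≤ |y - σ₀| := hyball t ht
        _ ≤ r := hy
        _ ≤ ρ/2 := min_le_right _ _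
        _ < ρ := by linarith
    -- FTC
    have hftc : ∫ t in σ₀..y, deriv S t = S y - S σ₀ := by
      apply intervalIntegral.integral_deriv_eq_sub
      · intro t ht; exact hd1 t (hsubball ht)
      · exact (hderivC.mono hsubball).intervalIntegrable
    have hlin : (∫ t in σ₀..y, (t - σ₀) * iteratedDeriv 2 S σ₀)
        = iteratedDeriv 2 S σ₀ / 2 * (y - σ₀)^2 := by
      rw [intervalIntegral.integral_mul_const]
      have : (∫ t in σ₀..y, (t - σ₀)) = (y - σ₀)^2 / 2 := by
        have := intervalIntegral.integral_comp_sub_right (fun t => t) σ₀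
          (a := σ₀) (b := y)
        rw [this, integral_id]
        ring
      rw [this]; ring
    have hint1 : IntervalIntegrable (deriv S) volume σ₀ y :=
      (hderivC.mono hsubball).intervalIntegrable
    have hint2 : IntervalIntegrable (fun t => (t - σ₀) * iteratedDeriv 2 S σ₀) volume σ₀ y := by
      apply Continuous.intervalIntegrable; continuity
    have hdiffint : S y - S σ₀ - iteratedDeriv 2 S σ₀ / 2 * (y - σ₀)^2
        = ∫ t in σ₀..y, (deriv S t - (t - σ₀) * iteratedDeriv 2 S σ₀) := by
      rw [intervalIntegral.integral_sub hint1 hint2, hftc, hlin]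
    rw [hdiffint, ← Real.norm_eq_abs]
    have hbound : ∀ t ∈ Set.uIoc σ₀ y,
        ‖deriv S t - (t - σ₀) * iteratedDeriv 2 S σ₀‖ ≤ δ * |y - σ₀| := by
      intro t ht
      have ht' : t ∈ Set.uIcc σ₀ y := Set.uIoc_subset_uIcc ht
      have hdist : dist t σ₀ < r₁ := by
        rw [Real.dist_eq]
        calc |t - σ₀| ≤ |y - σ₀| := hyball t ht'
          _ ≤ r := hy
          _ ≤ r₁/2 := min_le_left _ _
          _ < r₁ := by linarith
      have := hball1 t (by simpa [Metric.mem_ball] using hdist)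
      rw [h0] at this
      simp only [sub_zero, smul_eq_mul, Real.norm_eq_abs] at this ⊢
      calc |deriv S t - (t - σ₀) * iteratedDeriv 2 S σ₀| ≤ δ * |t - σ₀| := this
        _ ≤ δ * |y - σ₀| := by
            apply mul_le_mul_of_nonneg_left (hyball t ht') hδ.le
    calc ‖∫ t in σ₀..y, (deriv S t - (t - σ₀) * iteratedDeriv 2 S σ₀)‖
        ≤ δ * |y - σ₀| * |y - σ₀| :=
          intervalIntegral.norm_integral_le_of_norm_le_const hbound
      _ = δ * (y - σ₀)^2 := by rw [mul_assoc, ← abs_mul, ← sq, abs_of_nonneg (sq_nonneg _)]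

set_option maxHeartbeats 1000000 in
lemma singlePeak (S : ℝ → ℝ) (a b σ₀ : ℝ) (ha : a < σ₀) (hb : σ₀ < b)
    (hS : ContinuousOn S (Set.Icc a b))
    (hC2 : ContDiffAt ℝ 2 S σ₀)
    (hconc : iteratedDeriv 2 S σ₀ < 0)
    (hmax : ∀ y ∈ Set.Icc a b, y ≠ σ₀ → S y < S σ₀) :
    Filter.Tendsto
      (fun ε : ℝ => (∫ y in Set.Ioc a b, Real.exp ((S y - S σ₀)/ε)) / Real.sqrt ε)
      (nhdsWithin 0 (Set.Ioi 0))
      (nhds (Real.sqrt (2*π / (-(iteratedDeriv 2 S σ₀))))) := by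
  set lam : ℝ := -(iteratedDeriv 2 S σ₀) with hlam
  have hiter : iteratedDeriv 2 S σ₀ = -lam := by rw [hlam]; ring
  have hlampos : 0 < lam := by rw [hlam]; linarith
  have hloc : ∀ y ∈ Set.Icc a b, S y ≤ S σ₀ := by
    intro y hy
    by_cases h : y = σ₀
    · rw [h]
    · exact (hmax y hy h).le
  have hab : a < b := ha.trans hb
  set F : ℝ → ℝ → ℝ := fun ε u =>
    Set.indicator (Set.Ioc ((a - σ₀)/Real.sqrt ε) ((b - σ₀)/Real.sqrt ε))
      (fun u => Real.exp ((S (Real.sqrt ε * u + σ₀) - S σ₀)/ε)) u with hF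
  -- change of variables
  have hCOV : ∀ ε : ℝ, 0 < ε →
      (∫ y in Set.Ioc a b, Real.exp ((S y - S σ₀)/ε)) / Real.sqrt ε = ∫ u, F ε u := by
    intro ε hε
    have hspos : 0 < Real.sqrt ε := Real.sqrt_pos.mpr hε
    have h2 := intervalIntegral.integral_comp_mul_add
      (a := (a - σ₀)/Real.sqrt ε) (b := (b - σ₀)/Real.sqrt ε)
      (f := fun y => Real.exp ((S y - S σ₀)/ε)) hspos.ne' σ₀
    rw [show Real.sqrt ε * ((a - σ₀)/Real.sqrt ε) + σ₀ = a by field_simp; ring,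
        show Real.sqrt ε * ((b - σ₀)/Real.sqrt ε) + σ₀ = b by field_simp; ring] at h2
    have hab' : (a - σ₀)/Real.sqrt ε ≤ (b - σ₀)/Real.sqrt ε := by
      exact (div_le_div_iff_of_pos_right hspos).mpr (by linarith)
    have h3 : (∫ u, F ε u)
        = ∫ u in (a - σ₀)/Real.sqrt ε..(b - σ₀)/Real.sqrt ε,
            Real.exp ((S (Real.sqrt ε * u + σ₀) - S σ₀)/ε) := by
      simp only [hF]
      rw [MeasureTheory.integral_indicator measurableSet_Ioc,
        intervalIntegral.integral_of_le hab']
    rw [h3, h2, smul_eq_mul, ← intervalIntegral.integral_of_le hab.le,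
      div_eq_inv_mul]
  -- quadratic bound with δ = lam/4
  obtain ⟨r₀, hr₀, hr₀sub, hr₀bd⟩ := quad_bound S a b σ₀ ha hb hC2 hloc
    (show (0:ℝ) < lam/4 by linarith)
  have haK : a < σ₀ - r₀ := (hr₀sub ⟨le_rfl, by linarith⟩).1
  have hbK : σ₀ + r₀ < b := (hr₀sub ⟨by linarith, le_rfl⟩).2
  -- uniform gap outside the peak
  obtain ⟨m, hmpos, hmbd⟩ :
      ∃ m : ℝ, 0 < m ∧
        ∀ y ∈ Set.Icc a b \ Set.Ioo (σ₀ - r₀) (σ₀ + r₀), S y - S σ₀ ≤ -m := by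
    set K := Set.Icc a b \ Set.Ioo (σ₀ - r₀) (σ₀ + r₀) with hK
    have hKcomp : IsCompact K := isCompact_Icc.diff isOpen_Ioo
    have haKmem : a ∈ K := by
      refine ⟨⟨le_refl a, hab.le⟩, ?_⟩
      simp only [Set.mem_Ioo, not_and, not_lt]
      intro h; linarith
    obtain ⟨y₀, hy₀K, hy₀max⟩ := hKcomp.exists_isMaxOn ⟨a, haKmem⟩
      (hS.mono Set.diff_subset)
    have hy₀lt : S y₀ < S σ₀ := by
      apply hmax y₀ hy₀K.1
      intro h
      apply hy₀K.2
      rw [h]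
      exact ⟨by linarith, by linarith⟩
    refine ⟨S σ₀ - S y₀, by linarith, fun y hy => ?_⟩
    have := hy₀max hy
    simp only [Set.mem_setOf_eq] at this
    linarith
  -- dominating function
  set G : ℝ → ℝ := fun u => Real.exp (-(lam/4) * u^2) + Real.exp (-(m/(b-a)^2) * u^2)
    with hG
  have hGint : Integrable G :=
    (integrable_exp_neg_mul_sq (by linarith)).add
      (integrable_exp_neg_mul_sq (div_pos hmpos (by nlinarith)))
  -- dominated convergence
  have hmain : Filter.Tendsto (fun ε => ∫ u, F ε u) (nhdsWithin 0 (Set.Ioi 0))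
      (nhds (∫ u : ℝ, Real.exp (-(lam/2) * u^2))) := by
    apply MeasureTheory.tendsto_integral_filter_of_dominated_convergence G
    · -- measurability
      filter_upwards [self_mem_nhdsWithin] with ε (hε : 0 < ε)
      have hspos : 0 < Real.sqrt ε := Real.sqrt_pos.mpr hε
      simp only [hF]
      rw [aestronglyMeasurable_indicator_iff measurableSet_Ioc]
      have hcont : ContinuousOn (fun u => Real.exp ((S (Real.sqrt ε * u + σ₀) - S σ₀)/ε))
          (Set.Icc ((a - σ₀)/Real.sqrt ε) ((b - σ₀)/Real.sqrt ε)) := by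
        apply Real.continuous_exp.comp_continuousOn
        apply ContinuousOn.div_const
        apply ContinuousOn.sub _ continuousOn_const
        apply hS.comp ((continuous_const.mul continuous_id).add continuous_const).continuousOn
        intro u hu
        have h1 := hu.1
        have h2 := hu.2
        rw [div_le_iff₀ hspos] at h1
        rw [le_div_iff₀ hspos] at h2
        constructor
        · simp only [Pi.add_apply, Pi.mul_apply, id_eq]; nlinarith
        · simp only [Pi.add_apply, Pi.mul_apply, id_eq]; nlinarith
      exact (hcont.aestronglyMeasurable measurableSet_Icc).mono_measure
        (Measure.restrict_mono Set.Ioc_subset_Icc_self le_rfl)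
    · -- bound
      filter_upwards [self_mem_nhdsWithin] with ε (hε : 0 < ε)
      apply Filter.Eventually.of_forall
      intro u
      have hspos : 0 < Real.sqrt ε := Real.sqrt_pos.mpr hε
      have hs2 : Real.sqrt ε ^ 2 = ε := Real.sq_sqrt hε.le
      have hGpos1 : (0:ℝ) ≤ Real.exp (-(lam/4) * u^2) := (Real.exp_pos _).le
      have hGpos2 : (0:ℝ) ≤ Real.exp (-(m/(b-a)^2) * u^2) := (Real.exp_pos _).le
      simp only [hF]
      by_cases hu : u ∈ Set.Ioc ((a - σ₀)/Real.sqrt ε) ((b - σ₀)/Real.sqrt ε)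
      · rw [Set.indicator_of_mem hu]
        have h1 := hu.1
        have h2 := hu.2
        rw [div_lt_iff₀ hspos] at h1
        rw [le_div_iff₀ hspos] at h2
        set y := Real.sqrt ε * u + σ₀ with hy
        have hya : a < y := by rw [hy]; linarith
        have hyb : y ≤ b := by rw [hy]; linarith
        have hysub : y - σ₀ = Real.sqrt ε * u := by rw [hy]; ring
        have hyq : (y - σ₀)^2 = ε * u^2 := by rw [hysub, mul_pow, hs2]
        rw [Real.norm_eq_abs, abs_of_pos (Real.exp_pos _)]
        by_cases hcase : |Real.sqrt ε * u| ≤ r₀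
        · -- inner regime
          have hbd := hr₀bd y (by rw [hysub]; exact hcase)
          have hub := (abs_le.mp hbd).2
          rw [hiter] at hub
          have h3 : (S y - S σ₀)/ε ≤ -(lam/4) * u^2 := by
            rw [div_le_iff₀ hε]
            rw [hyq] at hub
            nlinarith [hub]
          calc Real.exp ((S y - S σ₀)/ε) ≤ Real.exp (-(lam/4) * u^2) :=
                Real.exp_le_exp.mpr h3
            _ ≤ G u := le_add_of_nonneg_right hGpos2
        · -- outer regime
          have hyK : y ∈ Set.Icc a b \ Set.Ioo (σ₀ - r₀) (σ₀ + r₀) := by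
            refine ⟨⟨hya.le, hyb⟩, ?_⟩
            intro h
            apply hcase
            rw [← hysub, abs_le]
            exact ⟨by linarith [h.1], by linarith [h.2]⟩
          have h1' := hmbd y hyK
          have habs : |Real.sqrt ε * u| ≤ b - a := by
            rw [← hysub, abs_le]
            constructor <;> linarith
          have hεu : ε * u^2 ≤ (b-a)^2 := by
            have h5 : (Real.sqrt ε * u)^2 ≤ (b-a)^2 := by
              have := abs_le.mp habs
              nlinarith [this.1, this.2]
            rw [mul_pow, hs2] at h5
            exact h5
          have h3 : (S y - S σ₀)/ε ≤ -(m/(b-a)^2) * u^2 := by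
            rw [div_le_iff₀ hε]
            have hq : m/(b-a)^2 * (u^2 * ε) ≤ m := by
              rw [div_mul_eq_mul_div, div_le_iff₀ (by nlinarith : (0:ℝ) < (b-a)^2)]
              calc m * (u^2 * ε) = m * (ε * u^2) := by ring
                _ ≤ m * (b-a)^2 := mul_le_mul_of_nonneg_left hεu hmpos.le
            have hre : -(m/(b-a)^2) * u^2 * ε = -(m/(b-a)^2 * (u^2 * ε)) := by ring
            rw [hre]
            linarith
          calc Real.exp ((S y - S σ₀)/ε) ≤ Real.exp (-(m/(b-a)^2) * u^2) :=
                Real.exp_le_exp.mpr h3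
            _ ≤ G u := le_add_of_nonneg_left hGpos1
      · rw [Set.indicator_of_notMem hu]
        simp only [norm_zero]
        positivity
    · exact hGint
    · -- pointwise limit
      apply Filter.Eventually.of_forall
      intro u
      have hT0 : Filter.Tendsto (fun ε : ℝ => Real.sqrt ε * u) (nhdsWithin 0 (Set.Ioi 0))
          (nhds 0) := by
        have h := (Real.continuous_sqrt.tendsto 0).mono_left
          (nhdsWithin_le_nhds (s := Set.Ioi (0:ℝ)))
        simpa using h.mul_const u
      have hevmem : ∀ᶠ ε in nhdsWithin 0 (Set.Ioi 0), 0 < ε ∧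
          u ∈ Set.Ioc ((a - σ₀)/Real.sqrt ε) ((b - σ₀)/Real.sqrt ε) := by
        filter_upwards [self_mem_nhdsWithin,
          hT0.eventually (eventually_gt_nhds (show a - σ₀ < 0 by linarith)),
          hT0.eventually (eventually_lt_nhds (show (0:ℝ) < b - σ₀ by linarith))]
          with ε hε h1 h2
        have hspos : 0 < Real.sqrt ε := Real.sqrt_pos.mpr hε
        refine ⟨hε, ?_, ?_⟩
        · rw [div_lt_iff₀ hspos]; linarith
        · rw [le_div_iff₀ hspos]; linarith
      have hexp : Filter.Tendsto
          (fun ε : ℝ => (S (Real.sqrt ε * u + σ₀) - S σ₀)/ε)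
          (nhdsWithin 0 (Set.Ioi 0)) (nhds (-(lam/2) * u^2)) := by
        rw [Metric.tendsto_nhds]
        intro η hη
        have hδpos : 0 < η/(2*(u^2+1)) := by positivity
        obtain ⟨r, hr, hrsub, hrbd⟩ := quad_bound S a b σ₀ ha hb hC2 hloc hδpos
        filter_upwards [self_mem_nhdsWithin,
          hT0 (Metric.ball_mem_nhds (0:ℝ) hr)] with ε hε hmem
        have hε' : (0:ℝ) < ε := hε
        have hspos : 0 < Real.sqrt ε := Real.sqrt_pos.mpr hε'
        have hs2 : Real.sqrt ε ^ 2 = ε := Real.sq_sqrt hε'.le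
        have hdist : |Real.sqrt ε * u| < r := by
          have h := hmem
          simp only [Set.mem_preimage, Metric.mem_ball, Real.dist_eq, sub_zero] at h
          exact h
        set y := Real.sqrt ε * u + σ₀ with hy
        have hysub : y - σ₀ = Real.sqrt ε * u := by rw [hy]; ring
        have hyq : (y - σ₀)^2 = ε * u^2 := by rw [hysub, mul_pow, hs2]
        have hbd := hrbd y (by rw [hysub]; exact hdist.le)
        rw [Real.dist_eq]
        have heq : (S y - S σ₀)/ε - (-(lam/2) * u^2)
            = (S y - S σ₀ - (iteratedDeriv 2 S σ₀)/2 * (y - σ₀)^2)/ε := by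
          rw [hiter, hyq]
          field_simp
        rw [heq, abs_div, abs_of_pos hε']
        have hstep : |S y - S σ₀ - (iteratedDeriv 2 S σ₀)/2 * (y - σ₀)^2| / ε
            ≤ (η/(2*(u^2+1)) * (ε * u^2)) / ε := by
          exact (div_le_div_iff_of_pos_right hε').mpr (by rw [← hyq]; exact hbd)
        calc |S y - S σ₀ - (iteratedDeriv 2 S σ₀)/2 * (y - σ₀)^2| / ε
            ≤ (η/(2*(u^2+1)) * (ε * u^2)) / ε := hstep
          _ = η/(2*(u^2+1)) * u^2 := by field_simp
          _ < η := by
              rw [div_mul_eq_mul_div, div_lt_iff₀ (by positivity)]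
              nlinarith [sq_nonneg u]
      apply Filter.Tendsto.congr' _ ((Real.continuous_exp.tendsto _).comp hexp)
      filter_upwards [hevmem] with ε hmem
      simp only [Function.comp_apply, hF]
      rw [Set.indicator_of_mem hmem.2]
  have hgauss : (∫ u : ℝ, Real.exp (-(lam/2) * u^2)) = Real.sqrt (2*π/lam) := by
    rw [integral_gaussian]
    congr 1
    field_simp
  rw [show Real.sqrt (2*π/(-(iteratedDeriv 2 S σ₀))) = Real.sqrt (2*π/lam) by rw [hlam]]
  rw [← hgauss]
  apply Filter.Tendsto.congr' _ hmain
  filter_upwards [self_mem_nhdsWithin] with ε hε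
  exact (hCOV ε hε).symm

lemma exp_decay {m : ℝ} (hm : 0 < m) :
    Filter.Tendsto (fun ε : ℝ => Real.exp (-(m/ε)) / Real.sqrt ε)
      (nhdsWithin 0 (Set.Ioi 0)) (nhds 0) := by
  have h1 : Filter.Tendsto (fun ε : ℝ => ε⁻¹) (nhdsWithin 0 (Set.Ioi 0)) atTop :=
    tendsto_inv_nhdsGT_zero
  have h2 : Filter.Tendsto (fun t : ℝ => t ^ (1/2 : ℝ) * Real.exp (-m * t)) atTop (nhds 0) :=
    tendsto_rpow_mul_exp_neg_mul_atTop_nhds_zero _ _ hm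
  apply (h2.comp h1).congr'
  filter_upwards [self_mem_nhdsWithin] with ε (hε : 0 < ε)
  have h3 : -m * ε⁻¹ = -(m/ε) := by ring
  simp only [Function.comp_apply]
  rw [h3, ← Real.sqrt_eq_rpow, Real.sqrt_inv, div_eq_mul_inv, mul_comm]
  exact (div_eq_mul_inv _ _).symm

lemma assemble (S : ℝ → ℝ) (α β : ℝ) (hαβ : α < β)
    (hS : ContinuousOn S (Set.Icc α β))
    (ℓ : ℕ) (hℓ : 1 ≤ ℓ) (σ : Fin ℓ → ℝ)
    (hσmono : StrictMono σ)
    (hC2 : ∀ i, ContDiffAt ℝ 2 S (σ i))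
    (hconc : ∀ i, iteratedDeriv 2 S (σ i) < 0)
    (M : ℝ) (hM : ∀ i, S (σ i) = M)
    (hmax : ∀ y ∈ Set.Icc α β, y ∉ Set.range σ → S y < M)
    (r : ℝ) (hr : 0 < r)
    (hsub : ∀ i, α < σ i - r ∧ σ i + r < β)
    (hdisj : ∀ i j : Fin ℓ, i < j → σ i + r < σ j - r)
    (z : ℝ) (hz1 : α < z) (hz2 : z ≤ β)
    (hzsep : ∀ i, σ i + r < z ∨ z < σ i - r) :
    Filter.Tendsto
      (fun ε : ℝ => (∫ y in Set.Ioc α z, Real.exp ((S y - M)/ε)) / Real.sqrt ε)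
      (nhdsWithin 0 (Set.Ioi 0))
      (nhds (∑ i, if σ i < z then Real.sqrt (2*π / (-(iteratedDeriv 2 S (σ i)))) else 0)) := by
  classical
  set P : Finset (Fin ℓ) := Finset.univ.filter (fun i => σ i < z) with hP
  set I : Fin ℓ → Set ℝ := fun i => Set.Ioc (σ i - r) (σ i + r) with hI
  have hPsep : ∀ i ∈ P, σ i + r < z := by
    intro i hi
    rcases hzsep i with h | h
    · exact h
    · exfalso
      have : σ i < z := (Finset.mem_filter.mp hi).2
      linarith
  have hIsub : ∀ i ∈ P, I i ⊆ Set.Ioc α z := by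
    intro i hi y hy
    exact ⟨(hsub i).1.trans hy.1, le_trans hy.2 (hPsep i hi).le⟩
  have hIccsub : ∀ i, Set.Icc (σ i - r) (σ i + r) ⊆ Set.Icc α β := fun i y hy =>
    ⟨(hsub i).1.le.trans hy.1, hy.2.trans (hsub i).2.le⟩
  have hgcont : ∀ ε : ℝ, ContinuousOn (fun y => Real.exp ((S y - M)/ε)) (Set.Icc α β) :=
    fun ε => Real.continuous_exp.comp_continuousOn ((hS.sub continuousOn_const).div_const ε)
  have hgint : ∀ ε : ℝ, IntegrableOn (fun y => Real.exp ((S y - M)/ε)) (Set.Icc α β) :=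
    fun ε => (hgcont ε).integrableOn_Icc
  have hIsubαβ : ∀ i, I i ⊆ Set.Icc α β := fun i => Set.Ioc_subset_Icc_self.trans (hIccsub i)
  have hIoczsub : Set.Ioc α z ⊆ Set.Icc α β := fun y hy => ⟨hy.1.le, hy.2.trans hz2⟩
  set U : Set ℝ := ⋃ i ∈ P, I i with hU
  have hUmeas : MeasurableSet U := P.measurableSet_biUnion (fun i _ => measurableSet_Ioc)
  have hUsub : U ⊆ Set.Ioc α z := by
    intro y hy
    simp only [hU, Set.mem_iUnion] at hy
    obtain ⟨i, hi, hyi⟩ := hy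
    exact hIsub i hi hyi
  have hdisj2 : ∀ i j : Fin ℓ, i < j → Disjoint (I i) (I j) := by
    intro i j h
    apply Set.disjoint_left.mpr
    intro y hy1 hy2
    have h1 := hy1.2
    have h2 := hy2.1
    have h3 := hdisj i j h
    linarith
  have hpair : (↑P : Set (Fin ℓ)).Pairwise (Function.onFun Disjoint I) := by
    intro i _ j _ hij
    rcases lt_or_gt_of_ne hij with h | h
    · exact hdisj2 i j h
    · exact (hdisj2 j i h).symm
  have hdecomp : ∀ ε : ℝ,
      (∫ y in Set.Ioc α z, Real.exp ((S y - M)/ε))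
        = (∑ i ∈ P, ∫ y in I i, Real.exp ((S y - M)/ε))
          + ∫ y in Set.Ioc α z \ U, Real.exp ((S y - M)/ε) := by
    intro ε
    have hint : IntegrableOn (fun y => Real.exp ((S y - M)/ε)) (Set.Ioc α z) :=
      (hgint ε).mono_set hIoczsub
    have h2 := MeasureTheory.integral_inter_add_diff (s := Set.Ioc α z)
      (f := fun y => Real.exp ((S y - M)/ε)) (μ := volume) hUmeas hint
    rw [Set.inter_eq_self_of_subset_right hUsub] at h2
    rw [← h2]
    congr 1
    exact MeasureTheory.integral_biUnion_finset P (fun i _ => measurableSet_Ioc) hpair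
      (fun i _ => (hgint ε).mono_set (hIsubαβ i))
  -- limits for each peak
  have hpeak : ∀ i ∈ P, Filter.Tendsto
      (fun ε : ℝ => (∫ y in I i, Real.exp ((S y - M)/ε)) / Real.sqrt ε)
      (nhdsWithin 0 (Set.Ioi 0))
      (nhds (Real.sqrt (2*π / (-(iteratedDeriv 2 S (σ i)))))) := by
    intro i _
    have hmax' : ∀ y ∈ Set.Icc (σ i - r) (σ i + r), y ≠ σ i → S y < S (σ i) := by
      intro y hy hne
      rw [hM i]
      apply hmax y (hIccsub i hy)
      rintro ⟨j, rfl⟩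
      rcases lt_trichotomy j i with h | h | h
      · have h4 := hdisj j i h
        have h5 := hy.1
        linarith
      · exact hne (by rw [h])
      · have h4 := hdisj i j h
        have h5 := hy.2
        linarith
    have h := singlePeak S (σ i - r) (σ i + r) (σ i) (by linarith) (by linarith)
      (hS.mono (hIccsub i)) (hC2 i) (hconc i) hmax'
    rw [hM i] at h
    exact h
  -- remainder
  set Kc : Set ℝ := Set.Icc α β \ ⋃ i : Fin ℓ, Set.Ioo (σ i - r) (σ i + r) with hKc
  have hKcomp : IsCompact Kc := isCompact_Icc.diff (isOpen_iUnion fun i => isOpen_Ioo)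
  have hαK : α ∈ Kc := by
    refine ⟨⟨le_rfl, hαβ.le⟩, ?_⟩
    simp only [Set.mem_iUnion, Set.mem_Ioo, not_exists, not_and, not_lt]
    intro i h
    linarith [(hsub i).1]
  obtain ⟨y₀, hy₀K, hy₀max⟩ := hKcomp.exists_isMaxOn ⟨α, hαK⟩ (hS.mono Set.diff_subset)
  have hy₀lt : S y₀ < M := by
    apply hmax y₀ hy₀K.1
    rintro ⟨j, rfl⟩
    apply hy₀K.2
    simp only [Set.mem_iUnion, Set.mem_Ioo]
    exact ⟨j, by linarith, by linarith⟩
  have hmpos : 0 < M - S y₀ := by linarith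
  have hTsub : Set.Ioc α z \ U ⊆ Kc := by
    rintro y ⟨hy1, hy2⟩
    refine ⟨hIoczsub hy1, fun hmem => ?_⟩
    simp only [Set.mem_iUnion, Set.mem_Ioo] at hmem
    obtain ⟨j, hj1, hj2⟩ := hmem
    rcases hzsep j with h | h
    · apply hy2
      simp only [hU, Set.mem_iUnion]
      refine ⟨j, ?_, ⟨hj1, hj2.le⟩⟩
      simp only [hP, Finset.mem_filter, Finset.mem_univ, true_and]
      linarith
    · linarith [hy1.2]
  have hrem : Filter.Tendsto
      (fun ε : ℝ => (∫ y in Set.Ioc α z \ U, Real.exp ((S y - M)/ε)) / Real.sqrt ε)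
      (nhdsWithin 0 (Set.Ioi 0)) (nhds 0) := by
    apply squeeze_zero_norm' (a := fun ε : ℝ =>
      (z - α) * (Real.exp (-((M - S y₀)/ε)) / Real.sqrt ε))
    · filter_upwards [self_mem_nhdsWithin] with ε (hε : 0 < ε)
      have hspos : 0 < Real.sqrt ε := Real.sqrt_pos.mpr hε
      have hvollt : volume (Set.Ioc α z \ U) < ⊤ :=
        lt_of_le_of_lt (measure_mono Set.diff_subset)
          (by rw [Real.volume_Ioc]; exact ENNReal.ofReal_lt_top)
      have hbd : ∀ y ∈ Set.Ioc α z \ U,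
          ‖Real.exp ((S y - M)/ε)‖ ≤ Real.exp (-((M - S y₀)/ε)) := by
        intro y hy
        rw [Real.norm_eq_abs, abs_of_pos (Real.exp_pos _)]
        apply Real.exp_le_exp.mpr
        have h1 : S y ≤ S y₀ := hy₀max (hTsub hy)
        calc (S y - M)/ε ≤ (-(M - S y₀))/ε :=
              (div_le_div_iff_of_pos_right hε).mpr (by linarith)
          _ = -((M - S y₀)/ε) := by rw [neg_div]
      have hmeas : AEStronglyMeasurable (fun y => Real.exp ((S y - M)/ε))
          (volume.restrict (Set.Ioc α z \ U)) :=
        ((hgint ε).mono_set (Set.diff_subset.trans hIoczsub)).aestronglyMeasurable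
      have hnorm := MeasureTheory.norm_setIntegral_le_of_norm_le_const hvollt hbd
      have hvle : (volume (Set.Ioc α z \ U)).toReal ≤ z - α := by
        have h3 : (volume (Set.Ioc α z \ U)).toReal ≤ (volume (Set.Ioc α z)).toReal :=
          ENNReal.toReal_mono (by rw [Real.volume_Ioc]; exact ENNReal.ofReal_ne_top)
            (measure_mono Set.diff_subset)
        rw [Real.volume_Ioc, ENNReal.toReal_ofReal (by linarith)] at h3
        exact h3
      rw [norm_div, Real.norm_eq_abs (Real.sqrt ε), abs_of_pos hspos]
      calc ‖∫ y in Set.Ioc α z \ U, Real.exp ((S y - M)/ε)‖ / Real.sqrt ε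
          ≤ (Real.exp (-((M - S y₀)/ε)) * (volume (Set.Ioc α z \ U)).toReal) / Real.sqrt ε := by
            apply (div_le_div_iff_of_pos_right hspos).mpr hnorm
        _ ≤ (Real.exp (-((M - S y₀)/ε)) * (z - α)) / Real.sqrt ε := by
            apply (div_le_div_iff_of_pos_right hspos).mpr
            exact mul_le_mul_of_nonneg_left hvle (Real.exp_pos _).le
        _ = (z - α) * (Real.exp (-((M - S y₀)/ε)) / Real.sqrt ε) := by ring
    · have h := (exp_decay hmpos).const_mul (z - α)
      simpa using h
  have hsum := tendsto_finset_sum P hpeak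
  have htot := hsum.add hrem
  rw [add_zero] at htot
  have hval : (∑ i ∈ P, Real.sqrt (2*π / (-(iteratedDeriv 2 S (σ i)))))
      = ∑ i, if σ i < z then Real.sqrt (2*π / (-(iteratedDeriv 2 S (σ i)))) else 0 := by
    rw [hP, Finset.sum_filter]
  rw [← hval]
  apply Filter.Tendsto.congr' _ htot
  filter_upwards [self_mem_nhdsWithin] with ε (hε : 0 < ε)
  rw [hdecomp ε, add_div, Finset.sum_div]

/-- Laplace asymptotics for the exit probability: if the continuous function `S` attains its
global maximum on `[α,β]` exactly at nondegenerate interior points `σ 0 < … < σ (ℓ-1)`, then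
for `x` not a maximizer, the ratio `(∫_α^x e^{S/ε})/(∫_α^β e^{S/ε})` converges, as `ε → 0⁺`,
to `(Σ_{i : σ i < x} (-S''(σ i))^{-1/2}) / (Σ_j (-S''(σ j))^{-1/2})`. -/
theorem stmt_4 (S : ℝ → ℝ) (α β : ℝ) (hαβ : α < β)
    (hS : ContinuousOn S (Set.Icc α β))
    (ℓ : ℕ) (hℓ : 1 ≤ ℓ) (σ : Fin ℓ → ℝ)
    (hσmono : StrictMono σ)
    (hσmem : ∀ i, σ i ∈ Set.Ioo α β)
    (hC2 : ∀ i, ContDiffAt ℝ 2 S (σ i))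
    (hconc : ∀ i, iteratedDeriv 2 S (σ i) < 0)
    (M : ℝ) (hM : ∀ i, S (σ i) = M)
    (hmax : ∀ y ∈ Set.Icc α β, y ∉ Set.range σ → S y < M)
    (x : ℝ) (hx : x ∈ Set.Ioo α β) (hxσ : x ∉ Set.range σ) :
    Filter.Tendsto
      (fun ε : ℝ => (∫ y in α..x, Real.exp (S y / ε)) / (∫ y in α..β, Real.exp (S y / ε)))
      (nhdsWithin 0 (Set.Ioi 0))
      (nhds ((∑ i, if σ i < x then 1 / Real.sqrt (-(iteratedDeriv 2 S (σ i))) else 0)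
        / (∑ i, 1 / Real.sqrt (-(iteratedDeriv 2 S (σ i)))))) := by
  classical
  have hne : Nonempty (Fin ℓ) := ⟨⟨0, hℓ⟩⟩
  have huniv : (Finset.univ : Finset (Fin ℓ)).Nonempty := Finset.univ_nonempty
  set gap : Fin ℓ → ℝ := fun i => min (min (σ i - α) (β - σ i))
    (min |x - σ i| (if h : (i : ℕ) + 1 < ℓ then σ ⟨(i:ℕ)+1, h⟩ - σ i else 1)) with hgap
  set R : ℝ := Finset.univ.inf' huniv gap with hRdef
  have hgappos : ∀ i, 0 < gap i := by
    intro i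
    apply lt_min (lt_min (by linarith [(hσmem i).1]) (by linarith [(hσmem i).2]))
    apply lt_min
    · rw [abs_pos, sub_ne_zero]
      intro h
      exact hxσ ⟨i, h.symm⟩
    · split_ifs with h
      · have h2 := hσmono (show i < ⟨(i:ℕ)+1, h⟩ from by simp [Fin.lt_def])
        linarith
      · norm_num
  have hRpos : 0 < R := by
    rw [hRdef, Finset.lt_inf'_iff]
    exact fun i _ => hgappos i
  have hRle : ∀ i, R ≤ gap i := fun i => Finset.inf'_le _ (Finset.mem_univ i)
  set r : ℝ := R/3 with hrdef
  have hrpos : 0 < r := by rw [hrdef]; linarith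
  have hsub : ∀ i, α < σ i - r ∧ σ i + r < β := by
    intro i
    have h1 := hRle i
    have h2 : R ≤ σ i - α := le_trans h1 ((min_le_left _ _).trans (min_le_left _ _))
    have h3 : R ≤ β - σ i := le_trans h1 ((min_le_left _ _).trans (min_le_right _ _))
    constructor <;> rw [hrdef] <;> linarith
  have habs : ∀ i, r < |x - σ i| := by
    intro i
    have h1 := hRle i
    have h2 : R ≤ |x - σ i| := le_trans h1 ((min_le_right _ _).trans (min_le_left _ _))
    rw [hrdef]; linarith
  have hdisj : ∀ i j : Fin ℓ, i < j → σ i + r < σ j - r := by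
    intro i j hij
    have hij' : (i:ℕ) + 1 < ℓ := lt_of_le_of_lt (Nat.succ_le_of_lt (Fin.lt_def.mp hij)) j.isLt
    have h1 := hRle i
    have h2 : R ≤ (if h : (i : ℕ) + 1 < ℓ then σ ⟨(i:ℕ)+1, h⟩ - σ i else 1) :=
      le_trans h1 ((min_le_right _ _).trans (min_le_right _ _))
    rw [dif_pos hij'] at h2
    have h3 : σ ⟨(i:ℕ)+1, hij'⟩ ≤ σ j :=
      hσmono.monotone (by simp [Fin.le_def]; exact Nat.succ_le_of_lt (Fin.lt_def.mp hij))
    rw [hrdef]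
    linarith
  have hzsepx : ∀ i, σ i + r < x ∨ x < σ i - r := by
    intro i
    have hnei : σ i ≠ x := fun h => hxσ ⟨i, h⟩
    rcases lt_or_gt_of_ne hnei with h | h
    · left
      have h2 := habs i
      rw [abs_of_pos (by linarith : 0 < x - σ i)] at h2
      linarith
    · right
      have h2 := habs i
      rw [abs_of_neg (by linarith : x - σ i < 0)] at h2
      linarith
  have hzsepβ : ∀ i, σ i + r < β ∨ β < σ i - r := fun i => Or.inl (hsub i).2
  have hNum := assemble S α β hαβ hS ℓ hℓ σ hσmono hC2 hconc M hM hmax r hrpos hsub hdisj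
    x hx.1 hx.2.le hzsepx
  have hDen := assemble S α β hαβ hS ℓ hℓ σ hσmono hC2 hconc M hM hmax r hrpos hsub hdisj
    β hαβ le_rfl hzsepβ
  set lamv : Fin ℓ → ℝ := fun i => Real.sqrt (2*π / (-(iteratedDeriv 2 S (σ i)))) with hlamv
  have hlampos : ∀ i, 0 < lamv i := by
    intro i
    apply Real.sqrt_pos.mpr
    exact div_pos (by positivity) (by linarith [hconc i])
  have hDenval : (∑ i, if σ i < β then lamv i else 0) = ∑ i, lamv i :=
    Finset.sum_congr rfl (fun i _ => if_pos (hσmem i).2)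
  rw [hDenval] at hDen
  have hDpos : 0 < ∑ i, lamv i := Finset.sum_pos (fun i _ => hlampos i) huniv
  have hdiv := hNum.div hDen (ne_of_gt hDpos)
  have hconv : ∀ i, lamv i
      = Real.sqrt (2*π) * (1 / Real.sqrt (-(iteratedDeriv 2 S (σ i)))) := by
    intro i
    simp only [hlamv]
    rw [Real.sqrt_div (by positivity) _, mul_one_div]
  have h2πpos : (0:ℝ) < Real.sqrt (2*π) := Real.sqrt_pos.mpr (by positivity)
  have hnumeq : (∑ i, if σ i < x then lamv i else 0)
      = Real.sqrt (2*π) * ∑ i, (if σ i < x then 1 / Real.sqrt (-(iteratedDeriv 2 S (σ i))) else 0) := by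
    rw [Finset.mul_sum]
    apply Finset.sum_congr rfl
    intro i _
    rw [hconv i, mul_ite, mul_zero]
  have hdeneq : (∑ i, lamv i)
      = Real.sqrt (2*π) * ∑ i, 1 / Real.sqrt (-(iteratedDeriv 2 S (σ i))) := by
    rw [Finset.mul_sum]
    exact Finset.sum_congr rfl (fun i _ => hconv i)
  rw [hnumeq, hdeneq, mul_div_mul_left _ _ (ne_of_gt h2πpos)] at hdiv
  apply Filter.Tendsto.congr' _ hdiv
  filter_upwards [self_mem_nhdsWithin] with ε (hε : 0 < ε)
  have hsq : Real.sqrt ε ≠ 0 := ne_of_gt (Real.sqrt_pos.mpr hε)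
  have key : ∀ c : ℝ, α < c →
      (∫ y in α..c, Real.exp (S y/ε))
        = Real.exp (M/ε) * ∫ y in Set.Ioc α c, Real.exp ((S y - M)/ε) := by
    intro c hc
    rw [intervalIntegral.integral_of_le hc.le, ← MeasureTheory.integral_const_mul]
    congr 1
    funext y
    rw [← Real.exp_add]
    congr 1
    field_simp
    ring
  symm
  calc (∫ y in α..x, Real.exp (S y/ε)) / (∫ y in α..β, Real.exp (S y/ε))
      = (Real.exp (M/ε) * ∫ y in Set.Ioc α x, Real.exp ((S y - M)/ε))
        / (Real.exp (M/ε) * ∫ y in Set.Ioc α β, Real.exp ((S y - M)/ε)) := by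
        rw [key x hx.1, key β hαβ]
    _ = (∫ y in Set.Ioc α x, Real.exp ((S y - M)/ε))
        / (∫ y in Set.Ioc α β, Real.exp ((S y - M)/ε)) :=
        mul_div_mul_left _ _ (Real.exp_ne_zero _)
    _ = ((∫ y in Set.Ioc α x, Real.exp ((S y - M)/ε)) / Real.sqrt ε)
        / ((∫ y in Set.Ioc α β, Real.exp ((S y - M)/ε)) / Real.sqrt ε) := by
        rw [div_eq_mul_inv (∫ y in Set.Ioc α x, Real.exp ((S y - M)/ε)) (Real.sqrt ε),
          div_eq_mul_inv (∫ y in Set.Ioc α β, Real.exp ((S y - M)/ε)) (Real.sqrt ε),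
          mul_div_mul_right _ _ (inv_ne_zero hsq)]
end

section
/- Suppose F : ℤ → ℝ is bounded, λ > 0, and R(k,k+1)(F(k+1)−F(k)) + R(k,k−1)(F(k−1)−F(k)) = λF(k) for all k ∈ ℤ, where R(k,k+1) ≥ c > 0, R(k,k−1) ≥ 0, all rates are uniformly bounded above, and R(k₀,k₀−1) = 0 for infinitely many indices k₀ tending to −∞. Then F ≡ 0. -/
private lemma aux_pos (R : ℤ → ℤ → ℝ) (c C : ℝ) (hc : 0 < c)
    (hR1 : ∀ k : ℤ, c ≤ R k (k+1) ∧ R k (k+1) ≤ C)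
    (hR2 : ∀ k : ℤ, 0 ≤ R k (k-1))
    (lam : ℝ) (hlam : 0 < lam)
    (F : ℤ → ℝ) (M : ℝ) (hF : ∀ k, |F k| ≤ M)
    (heq : ∀ k : ℤ, R k (k+1) * (F (k+1) - F k) + R k (k-1) * (F (k-1) - F k) = lam * F k)
    (k₀ : ℤ) (h0 : R k₀ (k₀-1) = 0) : ¬ 0 < F k₀ := by
  intro hpos
  have hC : 0 < C := hc.trans_le ((hR1 k₀).1.trans (hR1 k₀).2)
  set ε := lam * F k₀ / C with hε
  have hεpos : 0 < ε := div_pos (mul_pos hlam hpos) hC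
  have step : ∀ k : ℤ, lam * F k₀ ≤ R k (k+1) * (F (k+1) - F k) → ε ≤ F (k+1) - F k := by
    intro k h
    have hA := hR1 k
    have hΔ : 0 < F (k+1) - F k := by
      by_contra hn
      push_neg at hn
      have : R k (k+1) * (F (k+1) - F k) ≤ 0 :=
        mul_nonpos_of_nonneg_of_nonpos (hc.le.trans hA.1) hn
      nlinarith [mul_pos hlam hpos]
    rw [hε, div_le_iff₀ hC]
    nlinarith [mul_le_mul_of_nonneg_right hA.2 hΔ.le]
  have key : ∀ n : ℕ, F k₀ ≤ F (k₀ + n) ∧ ε ≤ F (k₀ + n + 1) - F (k₀ + n) := by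
    intro n
    induction n with
    | zero =>
      constructor
      · simp
      · have e := heq k₀
        rw [h0] at e
        have : lam * F k₀ ≤ R k₀ (k₀+1) * (F (k₀+1) - F k₀) := by linarith
        have := step k₀ this
        simpa using this
    | succ n ih =>
      have hmono : F k₀ ≤ F (k₀ + (n+1 : ℕ)) := by
        push_cast
        rw [← add_assoc]
        linarith [ih.1, ih.2]
      refine ⟨hmono, ?_⟩
      set k : ℤ := k₀ + (n+1 : ℕ) with hk
      have e := heq k
      have hk1 : k - 1 = k₀ + n := by rw [hk]; push_cast; ring
      rw [hk1] at e
      have hle : R k (k-1) * (F (k₀ + n) - F k) ≤ 0 := by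
        apply mul_nonpos_of_nonneg_of_nonpos (hR2 k)
        have : ε ≤ F k - F (k₀ + n) := by
          have := ih.2
          rw [hk]; push_cast; rw [← add_assoc]; linarith
        linarith
      rw [hk1] at hle
      have h1 : lam * F k₀ ≤ R k (k+1) * (F (k+1) - F k) := by
        have h2 : lam * F k₀ ≤ lam * F k :=
          mul_le_mul_of_nonneg_left hmono hlam.le
        linarith
      exact step k h1
  have grow : ∀ n : ℕ, F k₀ + n * ε ≤ F (k₀ + n) := by
    intro n
    induction n with
    | zero => simp
    | succ n ih =>
      have := (key n).2
      push_cast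
      rw [← add_assoc]
      push_cast at ih
      linarith
  obtain ⟨n, hn⟩ := exists_nat_gt ((M - F k₀) / ε)
  have h1 : M - F k₀ < n * ε := by
    rw [div_lt_iff₀ hεpos] at hn; linarith
  have h2 := grow n
  have h3 := hF (k₀ + n)
  have := abs_le.mp h3
  linarith [this.2]

/-- Uniqueness of bounded solutions to `(λ - L)F = 0` for a nearest-neighbor chain on `ℤ`
with right rates bounded below by `c > 0`, nonnegative left rates vanishing at a sequence of
sites tending to `-∞`, and all rates bounded above: `F ≡ 0`. -/
theorem stmt_9 (R : ℤ → ℤ → ℝ) (c C : ℝ) (hc : 0 < c)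
    (hR1 : ∀ k : ℤ, c ≤ R k (k+1) ∧ R k (k+1) ≤ C)
    (hR2 : ∀ k : ℤ, 0 ≤ R k (k-1) ∧ R k (k-1) ≤ C)
    (hbar : ∀ n : ℤ, ∃ k₀ ≤ n, R k₀ (k₀-1) = 0)
    (lam : ℝ) (hlam : 0 < lam)
    (F : ℤ → ℝ) (M : ℝ) (hF : ∀ k, |F k| ≤ M)
    (heq : ∀ k : ℤ, R k (k+1) * (F (k+1) - F k) + R k (k-1) * (F (k-1) - F k) = lam * F k) :
    ∀ k, F k = 0 := by
  have hR2' : ∀ k : ℤ, 0 ≤ R k (k-1) := fun k => (hR2 k).1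
  -- at every barrier site, F vanishes
  have hzero : ∀ k₀ : ℤ, R k₀ (k₀-1) = 0 → F k₀ = 0 := by
    intro k₀ h0
    have hp := aux_pos R c C hc hR1 hR2' lam hlam F M hF heq k₀ h0
    have hneq : ∀ k : ℤ, R k (k+1) * ((-F) (k+1) - (-F) k) +
        R k (k-1) * ((-F) (k-1) - (-F) k) = lam * (-F) k := by
      intro k
      simp only [Pi.neg_apply]
      have := heq k
      ring_nf
      ring_nf at this
      linarith
    have hnF : ∀ k, |(-F) k| ≤ M := by
      intro k; simp only [Pi.neg_apply, abs_neg]; exact hF k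
    have hn := aux_pos R c C hc hR1 hR2' lam hlam (-F) M hnF hneq k₀ h0
    simp only [Pi.neg_apply, neg_pos] at hn
    push_neg at hp hn
    linarith
  -- propagation to the right of a barrier
  have hprop : ∀ k₀ : ℤ, R k₀ (k₀-1) = 0 →
      ∀ n : ℕ, F (k₀ + n) = 0 ∧ F (k₀ + n + 1) = 0 := by
    intro k₀ h0 n
    have hF0 : F k₀ = 0 := hzero k₀ h0
    induction n with
    | zero =>
      refine ⟨by simpa using hF0, ?_⟩
      have e := heq k₀
      rw [h0, hF0] at e
      simp only [zero_mul, add_zero, mul_zero, sub_zero] at e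
      have hc1 : 0 < R k₀ (k₀+1) := hc.trans_le (hR1 k₀).1
      have : F (k₀ + 1) = 0 := by
        rcases mul_eq_zero.mp e with h | h
        · exact absurd h (ne_of_gt hc1)
        · exact h
      simpa using this
    | succ n ih =>
      refine ⟨by push_cast; rw [← add_assoc]; push_cast at ih; linarith [ih.2], ?_⟩
      set k : ℤ := k₀ + (n+1 : ℕ) with hk
      have e := heq k
      have hk1 : k - 1 = k₀ + n := by rw [hk]; push_cast; ring
      rw [hk1] at e
      have h1 : F (k₀ + n) = 0 := ih.1
      have h2 : F k = 0 := by rw [hk]; push_cast; rw [← add_assoc]; linarith [ih.2]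
      rw [h1, h2] at e
      simp only [sub_zero, mul_zero, zero_sub, zero_mul, add_zero, neg_zero] at e
      have hc1 : 0 < R k (k+1) := hc.trans_le (hR1 k).1
      have : F (k + 1) = 0 := by
        rcases mul_eq_zero.mp e with h | h
        · exact absurd h (ne_of_gt hc1)
        · exact h
      exact this
  intro k
  obtain ⟨k₀, hk₀, h0⟩ := hbar k
  have hn : k = k₀ + ((k - k₀).toNat : ℤ) := by
    rw [Int.toNat_of_nonneg (by linarith)]; ring
  rw [hn]
  exact (hprop k₀ h0 (k - k₀).toNat).1
end
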